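/- arXiv:1412.6775 — 3 statements merged into one kernel-verified Lean document; each statement's English description precedes it below -/
import Mathlib

section
/- One has h̄(0) = 0 and h̄(w) > 0 for every w ∈ (0,𝐱]; consequently h̄ is strictly increasing on [0,𝐱], i.e., h̄(u) < h̄(v) whenever 0 ≤ u < v ≤ 𝐱. -/
/-!
Since `h > 0` coordinatewise, `c • θ ≤ h` for some `c > 0`, so every `ξ ≥ 0` with `θ·ξ = w`
costs `h·ξ ≥ c w`; hence `h̄(w) ≥ c w > 0` for `0 < w ≤ 𝐱`. As `𝒳` is star-shaped about `0`,
scaling a point of the fibre `θ·ξ = v` by `u / v` lands in the fibre `θ·ξ = u`, so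
`h̄(u) ≤ (u / v) h̄(v) < h̄(v)`.
-/

open Filter Topology Matrix
open scoped Pointwise

/-- The reduced holding cost `h̄(w) = min{h·ξ : ξ ∈ 𝒳, θ·ξ = w}`, defined via `sInf`. -/
noncomputable def hbar {I : ℕ} (𝒳 : Set (Fin I → ℝ)) (θ hvec : Fin I → ℝ) (w : ℝ) : ℝ :=
  sInf {c | ∃ ξ ∈ 𝒳, (∑ i, θ i * ξ i = w) ∧ ∑ i, hvec i * ξ i = c}

theorem exists_pos_smul_le {ι : Type*} [Finite ι] (θ : ι → ℝ) {h : ι → ℝ}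
    (hh : ∀ i, 0 < h i) : ∃ c : ℝ, 0 < c ∧ c • θ ≤ h := by
  have hsmall : ∀ᶠ c in 𝓝[>] (0 : ℝ), ∀ i, c * θ i ≤ h i := by
    refine eventually_all.2 fun i => nhdsWithin_le_nhds ?_
    have hlim := (continuous_mul_const (θ i)).tendsto' 0 0 (zero_mul _)
    exact (hlim.eventually (gt_mem_nhds (hh i))).mono fun _ => le_of_lt
  obtain ⟨c, hc, hcpos⟩ := (hsmall.and self_mem_nhdsWithin).exists
  exact ⟨c, hcpos, hc⟩

namespace Hbar

variable {I : ℕ} {𝒳 : Set (Fin I → ℝ)} {θ hvec : Fin I → ℝ}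

def costs (𝒳 : Set (Fin I → ℝ)) (θ hvec : Fin I → ℝ) (w : ℝ) : Set ℝ :=
  {c | ∃ ξ ∈ 𝒳, θ ⬝ᵥ ξ = w ∧ hvec ⬝ᵥ ξ = c}

theorem mem_costs {w c : ℝ} :
    c ∈ costs 𝒳 θ hvec w ↔ ∃ ξ ∈ 𝒳, θ ⬝ᵥ ξ = w ∧ hvec ⬝ᵥ ξ = c :=
  Iff.rfl

theorem hbar_eq_sInf_costs (w : ℝ) : hbar 𝒳 θ hvec w = sInf (costs 𝒳 θ hvec w) := rfl

theorem dotProduct_mem_costs {ξ : Fin I → ℝ} (hξ : ξ ∈ 𝒳) :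
    hvec ⬝ᵥ ξ ∈ costs 𝒳 θ hvec (θ ⬝ᵥ ξ) :=
  ⟨ξ, hξ, rfl, rfl⟩

theorem smul_costs_subset (h𝒳 : StarConvex ℝ 0 𝒳) {t : ℝ} (ht₀ : 0 ≤ t) (ht₁ : t ≤ 1)
    (w : ℝ) : t • costs 𝒳 θ hvec w ⊆ costs 𝒳 θ hvec (t * w) := by
  rintro _ ⟨_, ⟨ξ, hξ, rfl, rfl⟩, rfl⟩
  exact ⟨t • ξ, h𝒳.smul_mem hξ ht₀ ht₁, dotProduct_smul .., dotProduct_smul ..⟩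

theorem costs_nonempty_of_le (h𝒳 : StarConvex ℝ 0 𝒳) {ξ : Fin I → ℝ} (hξ : ξ ∈ 𝒳) {w : ℝ}
    (hw₀ : 0 < w) (hw : w ≤ θ ⬝ᵥ ξ) : (costs 𝒳 θ hvec w).Nonempty := by
  have hx : θ ⬝ᵥ ξ ≠ 0 := (hw₀.trans_le hw).ne'
  have hsub := smul_costs_subset (θ := θ) (hvec := hvec) h𝒳 (div_nonneg hw₀.le (hw₀.le.trans hw))
    (div_le_one_of_le₀ hw (hw₀.le.trans hw)) (θ ⬝ᵥ ξ)
  rw [div_mul_cancel₀ _ hx] at hsub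
  exact (Set.Nonempty.smul_set ⟨_, dotProduct_mem_costs hξ⟩).mono hsub

variable (hXnn : ∀ ξ ∈ 𝒳, 0 ≤ ξ)
include hXnn

theorem nonneg_of_mem_costs (hh : 0 ≤ hvec) {w c : ℝ} (hc : c ∈ costs 𝒳 θ hvec w) : 0 ≤ c := by
  obtain ⟨ξ, hξ, -, rfl⟩ := hc
  exact dotProduct_nonneg_of_nonneg hh (hXnn ξ hξ)

theorem hbar_nonneg (hh : 0 ≤ hvec) (w : ℝ) : 0 ≤ hbar 𝒳 θ hvec w :=
  Real.sInf_nonneg fun _ => nonneg_of_mem_costs hXnn hh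

theorem hbar_le_dotProduct (hh : 0 ≤ hvec) {ξ : Fin I → ℝ} (hξ : ξ ∈ 𝒳) :
    hbar 𝒳 θ hvec (θ ⬝ᵥ ξ) ≤ hvec ⬝ᵥ ξ :=
  csInf_le ⟨0, fun _ => nonneg_of_mem_costs hXnn hh⟩ (dotProduct_mem_costs hξ)

theorem mul_le_hbar {c w : ℝ} (hc : c • θ ≤ hvec) (hw : (costs 𝒳 θ hvec w).Nonempty) :
    c * w ≤ hbar 𝒳 θ hvec w := by
  refine le_csInf hw fun _ hc' => ?_
  obtain ⟨ξ, hξ, rfl, rfl⟩ := mem_costs.1 hc'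
  rw [← smul_eq_mul, ← smul_dotProduct]
  exact dotProduct_le_dotProduct_of_nonneg_right hc (hXnn ξ hξ)

theorem hbar_mul_le (h𝒳 : StarConvex ℝ 0 𝒳) (hh : 0 ≤ hvec) {t : ℝ} (ht₀ : 0 ≤ t)
    (ht₁ : t ≤ 1) {w : ℝ} (hw : (costs 𝒳 θ hvec w).Nonempty) :
    hbar 𝒳 θ hvec (t * w) ≤ t * hbar 𝒳 θ hvec w := by
  rw [hbar_eq_sInf_costs, hbar_eq_sInf_costs, ← smul_eq_mul t (sInf _),
    ← Real.sInf_smul_of_nonneg ht₀]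
  exact csInf_le_csInf ⟨0, fun _ => nonneg_of_mem_costs hXnn hh⟩ hw.smul_set
    (smul_costs_subset h𝒳 ht₀ ht₁ w)

end Hbar

open Hbar in
theorem hbar_zero_pos_strictMono_general (I : ℕ) (𝒳 : Set (Fin I → ℝ))
    (hXconv : Convex ℝ 𝒳)
    (hXnn : ∀ x ∈ 𝒳, ∀ i, 0 ≤ x i) (hX0 : (0 : Fin I → ℝ) ∈ 𝒳)
    (θ hvec : Fin I → ℝ) (hh : ∀ i, 0 < hvec i)
    (xmax : ℝ) (hxmax : IsGreatest {w | ∃ ξ ∈ 𝒳, ∑ i, θ i * ξ i = w} xmax) :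
    hbar 𝒳 θ hvec 0 = 0 ∧
    (∀ w, 0 < w → w ≤ xmax → 0 < hbar 𝒳 θ hvec w) ∧
    (∀ u v : ℝ, 0 ≤ u → u < v → v ≤ xmax → hbar 𝒳 θ hvec u < hbar 𝒳 θ hvec v) := by
  have h𝒳 : StarConvex ℝ 0 𝒳 := hXconv.starConvex hX0
  have hh₀ : 0 ≤ hvec := fun i => (hh i).le
  obtain ⟨c, hc₀, hc⟩ := exists_pos_smul_le θ hh
  obtain ⟨ξmax, hξmax, rfl⟩ := hxmax.1
  have hpos : ∀ w, 0 < w → w ≤ θ ⬝ᵥ ξmax → 0 < hbar 𝒳 θ hvec w := fun w hw₀ hw =>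
    (mul_pos hc₀ hw₀).trans_le (mul_le_hbar hXnn hc (costs_nonempty_of_le h𝒳 hξmax hw₀ hw))
  refine ⟨?_, hpos, fun u v hu huv hv => ?_⟩
  · refine le_antisymm ?_ (hbar_nonneg hXnn hh₀ 0)
    simpa using hbar_le_dotProduct hXnn (θ := θ) hh₀ hX0
  · have hv₀ : 0 < v := hu.trans_lt huv
    calc hbar 𝒳 θ hvec u = hbar 𝒳 θ hvec (u / v * v) := by rw [div_mul_cancel₀ _ hv₀.ne']
      _ ≤ u / v * hbar 𝒳 θ hvec v :=
        hbar_mul_le hXnn h𝒳 hh₀ (div_nonneg hu hv₀.le) (div_le_one_of_le₀ huv.le hv₀.le)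
          (costs_nonempty_of_le h𝒳 hξmax hv₀ hv)
      _ < hbar 𝒳 θ hvec v := mul_lt_of_lt_one_left (hpos v hv₀ hv) ((div_lt_one hv₀).2 huv)

/-- `h̄(0) = 0`, `h̄(w) > 0` for `w ∈ (0,𝐱]`, and `h̄` is strictly increasing on `[0,𝐱]`. -/
theorem hbar_zero_pos_strictMono (I : ℕ) (hI : 1 ≤ I) (𝒳 : Set (Fin I → ℝ))
    (hXc : IsCompact 𝒳) (hXconv : Convex ℝ 𝒳)
    (hXnn : ∀ x ∈ 𝒳, ∀ i, 0 ≤ x i) (hX0 : (0 : Fin I → ℝ) ∈ 𝒳)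
    (θ hvec : Fin I → ℝ) (hθ : ∀ i, 0 < θ i) (hh : ∀ i, 0 < hvec i)
    (xmax : ℝ) (hxmax : IsGreatest {w | ∃ ξ ∈ 𝒳, ∑ i, θ i * ξ i = w} xmax)
    (hxpos : 0 < xmax) :
    hbar 𝒳 θ hvec 0 = 0 ∧
    (∀ w, 0 < w → w ≤ xmax → 0 < hbar 𝒳 θ hvec w) ∧
    (∀ u v : ℝ, 0 ≤ u → u < v → v ≤ xmax → hbar 𝒳 θ hvec u < hbar 𝒳 θ hvec v) :=
  hbar_zero_pos_strictMono_general I 𝒳 hXconv hXnn hX0 θ hvec hh xmax hxmax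
end

section
/- Assume h ∈ (0,∞)^I satisfies the ordering h₁/θ₁ ≥ h₂/θ₂ ≥ … ≥ h_I/θ_I. Then for every w ∈ [0,θ·b], the point γ(w) is feasible (0 ≤ γ(w)_i ≤ b_i for all i and θ·γ(w) = w) and minimizes the holding cost: h·γ(w) ≤ h·x for every x ∈ ℝ^I with 0 ≤ x_i ≤ b_i for all i and θ·x = w. In particular, min{h·ξ : 0 ≤ ξ_i ≤ b_i for all i, θ·ξ = w} = Σ_{i=j(w)+1}^I h_i b_i + h_{j(w)} ξ(w). -/
/-!
The point `γ(w)` is the greedy filling: it saturates the classes with the smallest ratio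
`hᵢ/θᵢ` first. With `cᵢ = hᵢ/θᵢ` antitone and `k = j(w)` the partially filled class, any
feasible `x` satisfies `θᵢ(xᵢ - γᵢ) ≤ 0` above `k` and `≥ 0` below `k`, so
`h·x - h·γ = Σ cᵢ θᵢ(xᵢ - γᵢ) ≥ c_k Σ θᵢ(xᵢ - γᵢ) = c_k (w - w) = 0`.
-/

/-- `B j = b̂_j = Σ_{classes > j} θ_i b_i` (classes are 1-based: class `j` is Fin-index `j-1`). -/
noncomputable def bhat {I : ℕ} (b θ : Fin I → ℝ) (j : ℕ) : ℝ :=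
  ∑ i ∈ Finset.univ.filter (fun i : Fin I => j ≤ i.val), θ i * b i

theorem mul_sum_le_sum_mul_of_antitone {ι : Type*} [Fintype ι] [LinearOrder ι]
    {c d : ι → ℝ} (hc : Antitone c) (k : ι) (hgt : ∀ i, k < i → d i ≤ 0)
    (hlt : ∀ i, i < k → 0 ≤ d i) :
    c k * ∑ i, d i ≤ ∑ i, c i * d i := by
  rw [Finset.mul_sum]
  refine Finset.sum_le_sum fun i _ => ?_
  rcases lt_trichotomy k i with hki | rfl | hik
  · exact mul_le_mul_of_nonpos_right (hc hki.le) (hgt i hki)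
  · rfl
  · exact mul_le_mul_of_nonneg_right (hc hik.le) (hlt i hik)

theorem sum_mul_le_of_threshold {ι : Type*} [Fintype ι] [LinearOrder ι] {h θ b g x : ι → ℝ}
    (hθ : ∀ i, 0 < θ i) (hord : Antitone fun i => h i * (θ i)⁻¹) (k : ι)
    (hgt : ∀ i, k < i → g i = b i) (hlt : ∀ i, i < k → g i = 0)
    (hx : ∀ i, 0 ≤ x i ∧ x i ≤ b i) (hxg : ∑ i, θ i * x i = ∑ i, θ i * g i) :
    ∑ i, h i * g i ≤ ∑ i, h i * x i := by
  have key := mul_sum_le_sum_mul_of_antitone hord k (d := fun i => θ i * (x i - g i))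
    (fun i hi => mul_nonpos_of_nonneg_of_nonpos (hθ i).le (by linarith [hgt i hi, (hx i).2]))
    (fun i hi => mul_nonneg (hθ i).le (by linarith [hlt i hi, (hx i).1]))
  have hd : ∑ i, θ i * (x i - g i) = 0 := by
    simp only [mul_sub, Finset.sum_sub_distrib, hxg, sub_self]
  have hcd (i : ι) : h i * (θ i)⁻¹ * (θ i * (x i - g i)) = h i * x i - h i * g i := by
    field_simp [(hθ i).ne']
  simp only [hd, mul_zero, hcd, Finset.sum_sub_distrib] at key
  linarith

section bhat

variable {I : ℕ} (b θ : Fin I → ℝ)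

theorem bhat_zero : bhat b θ 0 = ∑ k, θ k * b k := by
  simp [bhat]

theorem bhat_eq_zero_of_le {j : ℕ} (hj : I ≤ j) : bhat b θ j = 0 :=
  Finset.sum_eq_zero fun i hi => absurd (Finset.mem_filter.1 hi).2 (by omega)

theorem bhat_le_sum {j : ℕ} (hθb : ∀ i, 0 ≤ θ i * b i) : bhat b θ j ≤ ∑ k, θ k * b k :=
  Finset.sum_le_sum_of_subset_of_nonneg (Finset.filter_subset _ _) fun i _ _ => hθb i

theorem bhat_sub_one {j : ℕ} (hj1 : 1 ≤ j) (hjI : j ≤ I) :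
    bhat b θ (j - 1) = θ ⟨j - 1, Nat.sub_one_lt_of_le hj1 hjI⟩
      * b ⟨j - 1, Nat.sub_one_lt_of_le hj1 hjI⟩ + bhat b θ j := by
  have hset : Finset.univ.filter (fun i : Fin I => j - 1 ≤ i.val)
      = insert ⟨j - 1, Nat.sub_one_lt_of_le hj1 hjI⟩
          (Finset.univ.filter fun i : Fin I => j ≤ i.val) := by
    ext i
    simp only [Finset.mem_filter, Finset.mem_insert, Finset.mem_univ, true_and, Fin.ext_iff]
    omega
  rw [bhat, hset, Finset.sum_insert (by simp; omega), bhat]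

theorem exists_bhat_bracket {w : ℝ} (hw0 : 0 ≤ w) (hw : w < ∑ k, θ k * b k) :
    ∃ j, 1 ≤ j ∧ j ≤ I ∧ bhat b θ j ≤ w ∧ w < bhat b θ (j - 1) := by
  classical
  have hex : ∃ j, bhat b θ j ≤ w := ⟨I, by rwa [bhat_eq_zero_of_le b θ le_rfl]⟩
  have hj1 : 1 ≤ Nat.find hex := by
    by_contra! h0
    have := Nat.find_spec hex
    rw [Nat.lt_one_iff.1 h0, bhat_zero] at this
    linarith
  refine ⟨Nat.find hex, hj1, Nat.find_min' hex ?_, Nat.find_spec hex, ?_⟩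
  · rwa [bhat_eq_zero_of_le b θ le_rfl]
  · exact not_le.1 (Nat.find_min hex (by omega))

end bhat

/-- The point `γ(w)` when `w ∈ [b̂_j, b̂_{j-1})`. -/
noncomputable def greedyPoint {I : ℕ} (b θ : Fin I → ℝ) (w : ℝ) (j : ℕ) : Fin I → ℝ :=
  fun i => if j ≤ i.val then b i else if i.val = j - 1 then (w - bhat b θ j) / θ i else 0

section greedyPoint

variable {I : ℕ} {b θ : Fin I → ℝ} {w : ℝ} {j : ℕ}

theorem sum_mul_greedyPoint (f : Fin I → ℝ) (hj1 : 1 ≤ j) (hjI : j ≤ I) :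
    ∑ i, f i * greedyPoint b θ w j i =
      ∑ i ∈ Finset.univ.filter (fun i : Fin I => j ≤ i.val), f i * b i
        + f ⟨j - 1, Nat.sub_one_lt_of_le hj1 hjI⟩
          * ((w - bhat b θ j) / θ ⟨j - 1, Nat.sub_one_lt_of_le hj1 hjI⟩) := by
  simp only [greedyPoint, mul_ite, mul_zero, Finset.sum_ite, Finset.sum_const_zero, add_zero]
  congr 1
  refine Finset.sum_eq_single_of_mem (⟨j - 1, Nat.sub_one_lt_of_le hj1 hjI⟩ : Fin I)
    (by simp; omega) fun i hi hne => ?_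
  simp only [Finset.mem_filter, Finset.mem_univ, true_and] at hi
  exact absurd (Fin.ext hi.2) hne

theorem sum_mul_greedyPoint_theta (hθ : ∀ i, 0 < θ i) (hj1 : 1 ≤ j) (hjI : j ≤ I) :
    ∑ i, θ i * greedyPoint b θ w j i = w := by
  rw [sum_mul_greedyPoint θ hj1 hjI, mul_div_cancel₀ _ (hθ _).ne']
  exact add_sub_cancel _ w

theorem greedyPoint_mem_box (hb : ∀ i, 0 ≤ b i) (hθ : ∀ i, 0 < θ i) (hj1 : 1 ≤ j) (hjI : j ≤ I)
    (hlo : bhat b θ j ≤ w) (hhi : w < bhat b θ (j - 1)) (i : Fin I) :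
    0 ≤ greedyPoint b θ w j i ∧ greedyPoint b θ w j i ≤ b i := by
  unfold greedyPoint
  split_ifs with hji hij
  · exact ⟨hb i, le_rfl⟩
  · rw [show i = ⟨j - 1, Nat.sub_one_lt_of_le hj1 hjI⟩ from Fin.ext hij]
    rw [bhat_sub_one b θ hj1 hjI] at hhi
    constructor
    · exact div_nonneg (by linarith) (hθ _).le
    · rw [div_le_iff₀ (hθ _), mul_comm]
      linarith
  · exact ⟨le_rfl, hb i⟩

theorem greedyPoint_minimizes {hcost : Fin I → ℝ} (hθ : ∀ i, 0 < θ i)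
    (hord : Antitone fun i => hcost i * (θ i)⁻¹) (hj1 : 1 ≤ j) (hjI : j ≤ I)
    {x : Fin I → ℝ} (hx : ∀ i, 0 ≤ x i ∧ x i ≤ b i) (hxw : ∑ i, θ i * x i = w) :
    ∑ i, hcost i * greedyPoint b θ w j i ≤ ∑ i, hcost i * x i := by
  refine sum_mul_le_of_threshold hθ hord ⟨j - 1, Nat.sub_one_lt_of_le hj1 hjI⟩
    (fun i hi => ?_) (fun i hi => ?_) hx (by rw [hxw, sum_mul_greedyPoint_theta hθ hj1 hjI])
  · have : j - 1 < i.val := hi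
    simp [greedyPoint, show j ≤ i.val by omega]
  · have : i.val < j - 1 := hi
    simp [greedyPoint, show ¬ j ≤ i.val by omega, this.ne]

theorem isLeast_greedyPoint {hcost : Fin I → ℝ} (hb : ∀ i, 0 ≤ b i) (hθ : ∀ i, 0 < θ i)
    (hord : Antitone fun i => hcost i * (θ i)⁻¹) (hj1 : 1 ≤ j) (hjI : j ≤ I)
    (hlo : bhat b θ j ≤ w) (hhi : w < bhat b θ (j - 1)) :
    IsLeast {c | ∃ x : Fin I → ℝ, (∀ i, 0 ≤ x i ∧ x i ≤ b i) ∧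
        (∑ i, θ i * x i = w) ∧ ∑ i, hcost i * x i = c}
      (∑ i, hcost i * greedyPoint b θ w j i) :=
  ⟨⟨_, greedyPoint_mem_box hb hθ hj1 hjI hlo hhi, sum_mul_greedyPoint_theta hθ hj1 hjI, rfl⟩,
    fun _ ⟨_, hx, hxw, hc⟩ => hc ▸ greedyPoint_minimizes hθ hord hj1 hjI hx hxw⟩

end greedyPoint

/-- Under the ordering `h₁μ₁ ≥ … ≥ h_Iμ_I`, for every `w ∈ [0,θ·b]` the point `γ(w)` is
feasible and minimizes the holding cost `h·x` among feasible points; in particular the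
minimum equals `Σ_{i=j(w)+1}^I h_i b_i + h_{j(w)} ξ(w)`. -/
theorem gamma_minimizes_holding_cost (I : ℕ) (hI : 1 ≤ I)
    (b θ hcost : Fin I → ℝ)
    (hb : ∀ i, 0 < b i) (hθ : ∀ i, 0 < θ i)
    (hord : ∀ i j : Fin I, i ≤ j → hcost j * (θ j)⁻¹ ≤ hcost i * (θ i)⁻¹)
    (γ : ℝ → Fin I → ℝ)
    (hγ : ∀ w : ℝ, 0 ≤ w → w < ∑ k, θ k * b k →
      ∀ j : ℕ, 1 ≤ j → j ≤ I → bhat b θ j ≤ w → w < bhat b θ (j - 1) →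
        γ w = fun i : Fin I =>
          if j ≤ i.val then b i
          else if i.val = j - 1 then (w - bhat b θ j) / θ i else 0)
    (hγtop : γ (∑ k, θ k * b k) = b) :
    ∀ w ∈ Set.Icc (0:ℝ) (∑ k, θ k * b k),
      ((∀ i, 0 ≤ γ w i ∧ γ w i ≤ b i) ∧ (∑ i, θ i * γ w i = w)) ∧
      (∀ x : Fin I → ℝ, (∀ i, 0 ≤ x i ∧ x i ≤ b i) → (∑ i, θ i * x i = w) →
        ∑ i, hcost i * γ w i ≤ ∑ i, hcost i * x i) ∧
      (∀ j : ℕ, ∀ hj1 : 1 ≤ j, ∀ hjI : j ≤ I,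
        bhat b θ j ≤ w → w < bhat b θ (j - 1) →
        IsLeast {c | ∃ x : Fin I → ℝ, (∀ i, 0 ≤ x i ∧ x i ≤ b i) ∧
                      (∑ i, θ i * x i = w) ∧ ∑ i, hcost i * x i = c}
          ((∑ i ∈ Finset.univ.filter (fun i : Fin I => j ≤ i.val), hcost i * b i)
            + hcost ⟨j - 1, by omega⟩
              * ((w - bhat b θ j) / θ (⟨j - 1, by omega⟩ : Fin I)))) := by
  rintro w ⟨hw0, hwT⟩
  have hb' (i : Fin I) : 0 ≤ b i := (hb i).le
  rcases hwT.lt_or_eq with hwT | rfl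
  · obtain ⟨j, hj1, hjI, hlo, hhi⟩ := exists_bhat_bracket b θ hw0 hwT
    rw [hγ w hw0 hwT j hj1 hjI hlo hhi]
    refine ⟨⟨greedyPoint_mem_box hb' hθ hj1 hjI hlo hhi,
        sum_mul_greedyPoint_theta hθ hj1 hjI⟩,
      fun x hx hxw => greedyPoint_minimizes hθ hord hj1 hjI hx hxw,
      fun j' hj1' hjI' hlo' hhi' => ?_⟩
    rw [← sum_mul_greedyPoint hcost hj1' hjI']
    exact isLeast_greedyPoint hb' hθ hord hj1' hjI' hlo' hhi'
  · rw [hγtop]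
    refine ⟨⟨fun i => ⟨hb' i, le_rfl⟩, rfl⟩, fun x hx hxw => ?_, fun j _ _ _ hhi => ?_⟩
    · exact sum_mul_le_of_threshold hθ hord ⟨0, hI⟩ (fun _ _ => rfl)
        (fun i hi => absurd hi (Nat.not_lt_zero _)) hx hxw
    · exact absurd hhi (bhat_le_sum b θ fun i => mul_nonneg (hθ i).le (hb' i)).not_gt
end

section
/- The Harrison–Taksar Bellman equation has at most one C² solution: if f and g are both functions in C²[0,𝐱] satisfying min{ (1/2) σ̄² u''(x) + m̄ u'(x) − α u(x) + h̄(x), u'(x), r̄ − u'(x) } = 0 for all x ∈ (0,𝐱), together with the Neumann boundary conditions u'(0) = 0 and u'(𝐱) = r̄, then f(x) = g(x) for all x ∈ [0,𝐱]. -/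
/-!
Write `Γu = σ²/2 u'' + m u' - α u + h` (`diffusionOperator`). A solution has `0 ≤ u' ≤ r` and
`Γu ≥ 0` on `[0, 𝐱]`, and moreover `u' > 0` on `(0, 𝐱]`: at the last interior zero `c` of `u'`
we get `u''(c) = 0`, hence `α u(c) ≤ h(c)`; as `h` is nondecreasing, the equation `Γu = 0` just
right of `c` bounds `max u'` on `[c, c + t]` by a multiple of itself that tends to `0` with `t`.

If `f - g` had a positive maximum, let `x₀` be its leftmost maximum point. There `f' = g'`
(Fermat, or the Neumann data) and `f'' ≤ g''`, so `Γg(x₀) > Γf(x₀) ≥ 0`. Near `x₀` the equation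
then forces `g' ∈ {0, r}`, i.e. `g' = r`, so `(f - g)' = f' - r ≤ 0` just left of `x₀`, and a
point left of `x₀` is a maximum point as well.
-/

open Set Filter Topology

section Calculus

variable {φ φ' : ℝ → ℝ} {a b : ℝ}

theorem strictMonoOn_Icc_of_hasDerivAt_pos (hc : ContinuousOn φ (Icc a b))
    (hd : ∀ x ∈ Ioo a b, HasDerivAt φ (φ' x) x) (hpos : ∀ x ∈ Ioo a b, 0 < φ' x) :
    StrictMonoOn φ (Icc a b) :=
  strictMonoOn_of_hasDerivWithinAt_pos (convex_Icc a b) hc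
    (by simpa only [interior_Icc] using fun x hx => (hd x hx).hasDerivWithinAt)
    (by simpa only [interior_Icc] using hpos)

theorem strictAntiOn_Icc_of_hasDerivAt_neg (hc : ContinuousOn φ (Icc a b))
    (hd : ∀ x ∈ Ioo a b, HasDerivAt φ (φ' x) x) (hneg : ∀ x ∈ Ioo a b, φ' x < 0) :
    StrictAntiOn φ (Icc a b) :=
  strictAntiOn_of_hasDerivWithinAt_neg (convex_Icc a b) hc
    (by simpa only [interior_Icc] using fun x hx => (hd x hx).hasDerivWithinAt)
    (by simpa only [interior_Icc] using hneg)

theorem antitoneOn_Icc_of_hasDerivAt_nonpos (hc : ContinuousOn φ (Icc a b))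
    (hd : ∀ x ∈ Ioo a b, HasDerivAt φ (φ' x) x) (hnonpos : ∀ x ∈ Ioo a b, φ' x ≤ 0) :
    AntitoneOn φ (Icc a b) :=
  antitoneOn_of_hasDerivWithinAt_nonpos (convex_Icc a b) hc
    (by simpa only [interior_Icc] using fun x hx => (hd x hx).hasDerivWithinAt)
    (by simpa only [interior_Icc] using hnonpos)

theorem sub_le_mul_sub_of_hasDerivAt_le {C : ℝ} (hc : ContinuousOn φ (Icc a b))
    (hd : ∀ x ∈ Ioo a b, HasDerivAt φ (φ' x) x) (hle : ∀ x ∈ Ioo a b, φ' x ≤ C)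
    {y : ℝ} (hy : y ∈ Icc a b) : φ y - φ a ≤ C * (y - a) := by
  rw [← interior_Icc] at hd hle
  refine (convex_Icc a b).image_sub_le_mul_sub_of_deriv_le hc
    (fun x hx => (hd x hx).differentiableAt.differentiableWithinAt)
    (fun x hx => (hd x hx).deriv ▸ hle x hx) a (left_mem_Icc.2 (hy.1.trans hy.2)) y hy hy.1

end Calculus

structure IsC2On (u u' u'' : ℝ → ℝ) (a b : ℝ) : Prop where
  continuousOn : ContinuousOn u (Icc a b)
  continuousOn_deriv : ContinuousOn u' (Icc a b)
  continuousOn_deriv2 : ContinuousOn u'' (Icc a b)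
  hasDerivAt : ∀ x ∈ Ioo a b, HasDerivAt u (u' x) x
  hasDerivAt_deriv : ∀ x ∈ Ioo a b, HasDerivAt u' (u'' x) x

namespace IsC2On

variable {u u' u'' v v' v'' : ℝ → ℝ} {a b c d : ℝ}

theorem mono (hu : IsC2On u u' u'' a b) (hac : a ≤ c) (hdb : d ≤ b) : IsC2On u u' u'' c d where
  continuousOn := hu.continuousOn.mono (Icc_subset_Icc hac hdb)
  continuousOn_deriv := hu.continuousOn_deriv.mono (Icc_subset_Icc hac hdb)
  continuousOn_deriv2 := hu.continuousOn_deriv2.mono (Icc_subset_Icc hac hdb)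
  hasDerivAt x hx := hu.hasDerivAt x (Ioo_subset_Ioo hac hdb hx)
  hasDerivAt_deriv x hx := hu.hasDerivAt_deriv x (Ioo_subset_Ioo hac hdb hx)

theorem sub (hu : IsC2On u u' u'' a b) (hv : IsC2On v v' v'' a b) :
    IsC2On (u - v) (u' - v') (u'' - v'') a b where
  continuousOn := hu.continuousOn.sub hv.continuousOn
  continuousOn_deriv := hu.continuousOn_deriv.sub hv.continuousOn_deriv
  continuousOn_deriv2 := hu.continuousOn_deriv2.sub hv.continuousOn_deriv2
  hasDerivAt x hx := (hu.hasDerivAt x hx).sub (hv.hasDerivAt x hx)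
  hasDerivAt_deriv x hx := (hu.hasDerivAt_deriv x hx).sub (hv.hasDerivAt_deriv x hx)

theorem lt_right_of_deriv_left_eq_zero (hu : IsC2On u u' u'' a b) (hab : a < b)
    (h' : u' a = 0) (hpos : ∀ x ∈ Ioo a b, 0 < u'' x) : u a < u b := by
  have h'mono := strictMonoOn_Icc_of_hasDerivAt_pos hu.continuousOn_deriv hu.hasDerivAt_deriv hpos
  refine strictMonoOn_Icc_of_hasDerivAt_pos hu.continuousOn hu.hasDerivAt (fun x hx => ?_)
    (left_mem_Icc.2 hab.le) (right_mem_Icc.2 hab.le) hab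
  simpa only [h'] using h'mono (left_mem_Icc.2 hab.le) (Ioo_subset_Icc_self hx) hx.1

theorem lt_left_of_deriv_right_eq_zero (hu : IsC2On u u' u'' a b) (hab : a < b)
    (h' : u' b = 0) (hpos : ∀ x ∈ Ioo a b, 0 < u'' x) : u b < u a := by
  have h'mono := strictMonoOn_Icc_of_hasDerivAt_pos hu.continuousOn_deriv hu.hasDerivAt_deriv hpos
  refine strictAntiOn_Icc_of_hasDerivAt_neg hu.continuousOn hu.hasDerivAt (fun x hx => ?_)
    (left_mem_Icc.2 hab.le) (right_mem_Icc.2 hab.le) hab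
  simpa only [h'] using h'mono (Ioo_subset_Icc_self hx) (right_mem_Icc.2 hab.le) hx.2

theorem deriv2_nonpos_of_isMaxOn (hu : IsC2On u u' u'' a b) (hab : a < b) {x₀ : ℝ}
    (hx₀ : x₀ ∈ Icc a b) (hmax : IsMaxOn u (Icc a b) x₀) (h' : u' x₀ = 0) : u'' x₀ ≤ 0 := by
  by_contra! hpos
  obtain ⟨δ, hδ, hball⟩ := Metric.continuousWithinAt_iff.1 (hu.continuousOn_deriv2 x₀ hx₀) _ hpos
  have hpos' : ∀ x ∈ Icc a b, |x - x₀| < δ → 0 < u'' x := fun x hx hd => by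
    have := hball hx hd
    rw [Real.dist_eq, abs_sub_lt_iff] at this
    linarith
  rcases hx₀.2.lt_or_eq with hlt | rfl
  · have hq : x₀ < min b (x₀ + δ / 2) := lt_min hlt (by linarith)
    refine ((hu.mono hx₀.1 (min_le_left _ _)).lt_right_of_deriv_left_eq_zero hq h' fun x hx =>
      hpos' x ⟨hx₀.1.trans hx.1.le, hx.2.le.trans (min_le_left _ _)⟩ ?_).not_ge
      (hmax ⟨hx₀.1.trans hq.le, min_le_left _ _⟩)
    rw [abs_sub_lt_iff]
    constructor <;> linarith [hx.1, hx.2, min_le_right b (x₀ + δ / 2)]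
  · have hp : max a (x₀ - δ / 2) < x₀ := max_lt hab (by linarith)
    refine ((hu.mono (le_max_left _ _) le_rfl).lt_left_of_deriv_right_eq_zero hp h' fun x hx =>
      hpos' x ⟨(le_max_left _ _).trans hx.1.le, hx.2.le⟩ ?_).not_ge
      (hmax ⟨le_max_left _ _, hp.le.trans hx₀.2⟩)
    rw [abs_sub_lt_iff]
    constructor <;> linarith [hx.1, hx.2, le_max_right a (x₀ - δ / 2)]

theorem deriv_nonpos_of_deriv2_le (hu : IsC2On u u' u'' a b) {K L : ℝ} (hK : 0 ≤ K) (hL : 0 ≤ L)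
    (ha : u' a = 0) (hsmall : (K * (b - a) + L) * (b - a) < 1)
    (h'' : ∀ x ∈ Ioo a b, u'' x ≤ K * (u x - u a) + L * u' x) : ∀ x ∈ Icc a b, u' x ≤ 0 := by
  intro x hx
  obtain ⟨y₀, hy₀, hmax⟩ := isCompact_Icc.exists_isMaxOn ⟨x, hx⟩ hu.continuousOn_deriv
  refine (hmax hx).trans (not_lt.1 fun hV => ?_)
  have hu_le : ∀ y ∈ Icc a b, u y - u a ≤ u' y₀ * (y - a) := fun y hy =>
    sub_le_mul_sub_of_hasDerivAt_le hu.continuousOn hu.hasDerivAt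
      (fun z hz => hmax (Ioo_subset_Icc_self hz)) hy
  have hu''_le : ∀ y ∈ Ioo a b, u'' y ≤ (K * (b - a) + L) * u' y₀ := fun y hy => by
    have h1 := mul_le_mul_of_nonneg_left (hu_le y (Ioo_subset_Icc_self hy)) hK
    have h2 := mul_le_mul_of_nonneg_left (hmax (Ioo_subset_Icc_self hy)) hL
    have h3 := mul_le_mul_of_nonneg_left (by linarith [hy.2] : y - a ≤ b - a) (mul_nonneg hK hV.le)
    nlinarith [h'' y hy]
  have hV_le :=
    sub_le_mul_sub_of_hasDerivAt_le hu.continuousOn_deriv hu.hasDerivAt_deriv hu''_le hy₀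
  rw [ha, sub_zero] at hV_le
  have hab : 0 ≤ b - a := by linarith [hx.1, hx.2]
  have := mul_le_mul_of_nonneg_left (by linarith [hy₀.2] : y₀ - a ≤ b - a)
    (mul_nonneg (add_nonneg (mul_nonneg hK hab) hL) hV.le)
  nlinarith

end IsC2On

theorem min_min_eq_zero_iff {A B C : ℝ} :
    min (min A B) C = 0 ↔ 0 ≤ A ∧ 0 ≤ B ∧ 0 ≤ C ∧ (A = 0 ∨ B = 0 ∨ C = 0) := by
  grind

noncomputable def diffusionOperator (σ m α : ℝ) (h u u' u'' : ℝ → ℝ) (x : ℝ) : ℝ :=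
  σ ^ 2 / 2 * u'' x + m * u' x - α * u x + h x

theorem IsC2On.continuousOn_diffusionOperator {σ m α a b : ℝ} {h u u' u'' : ℝ → ℝ}
    (hu : IsC2On u u' u'' a b) (hh : ContinuousOn h (Icc a b)) :
    ContinuousOn (diffusionOperator σ m α h u u' u'') (Icc a b) :=
  (((continuousOn_const.mul hu.continuousOn_deriv2).add
    (continuousOn_const.mul hu.continuousOn_deriv)).sub
      (continuousOn_const.mul hu.continuousOn)).add hh

structure IsBellmanSolution (X σ m α r : ℝ) (h u u' u'' : ℝ → ℝ) : Prop
    extends IsC2On u u' u'' 0 X where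
  min_eq_zero : ∀ x ∈ Ioo 0 X,
    min (min (diffusionOperator σ m α h u u' u'' x) (u' x)) (r - u' x) = 0
  deriv_left : u' 0 = 0
  deriv_right : u' X = r

namespace IsBellmanSolution

variable {X σ m α r : ℝ} {h u u' u'' : ℝ → ℝ}

theorem deriv_mem_Icc (hu : IsBellmanSolution X σ m α r h u u' u'') (hr : 0 ≤ r) :
    ∀ x ∈ Icc 0 X, u' x ∈ Icc 0 r := by
  intro x hx
  rcases hx.1.eq_or_lt with rfl | h0
  · simp [hu.deriv_left, hr]
  rcases hx.2.eq_or_lt with rfl | hX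
  · simp [hu.deriv_right, hr]
  obtain ⟨-, hnonneg, hle, -⟩ := min_min_eq_zero_iff.1 (hu.min_eq_zero x ⟨h0, hX⟩)
  exact ⟨hnonneg, sub_nonneg.1 hle⟩

theorem diffusionOperator_nonneg (hu : IsBellmanSolution X σ m α r h u u' u'') (hX : 0 < X)
    (hhc : ContinuousOn h (Icc 0 X)) : ∀ x ∈ Icc 0 X, 0 ≤ diffusionOperator σ m α h u u' u'' x :=
  fun x hx => ContinuousWithinAt.closure_le (by rwa [closure_Ioo hX.ne]) continuousWithinAt_const
    ((hu.continuousOn_diffusionOperator hhc x hx).mono Ioo_subset_Icc_self)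
    fun y hy => (min_min_eq_zero_iff.1 (hu.min_eq_zero y hy)).1

theorem diffusionOperator_eq_zero (hu : IsBellmanSolution X σ m α r h u u' u'') {x : ℝ}
    (hx : x ∈ Ioo 0 X) (hpos : 0 < u' x) (hlt : u' x < r) :
    diffusionOperator σ m α h u u' u'' x = 0 := by
  obtain ⟨-, -, -, h0 | h0 | h0⟩ := min_min_eq_zero_iff.1 (hu.min_eq_zero x hx)
  · exact h0
  · linarith
  · linarith

theorem deriv_eq_of_diffusionOperator_pos (hu : IsBellmanSolution X σ m α r h u u' u'') {x : ℝ}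
    (hx : x ∈ Ioo 0 X) (hL : 0 < diffusionOperator σ m α h u u' u'' x) (hpos : 0 < u' x) :
    u' x = r := by
  obtain ⟨-, -, -, h0 | h0 | h0⟩ := min_min_eq_zero_iff.1 (hu.min_eq_zero x hx)
  · linarith
  · linarith
  · linarith

theorem exists_deriv_eq_zero_right (hu : IsBellmanSolution X σ m α r h u u' u'') (hσ : σ ≠ 0)
    (hα : 0 < α) (hr : 0 < r) (hhm : MonotoneOn h (Icc 0 X)) {c : ℝ} (hc : c ∈ Ioo 0 X)
    (hc0 : u' c = 0) : ∃ y ∈ Ioc c X, u' y = 0 := by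
  by_contra! hne
  have hpos : ∀ y ∈ Ioc c X, 0 < u' y := fun y hy =>
    (hu.deriv_mem_Icc hr.le y ⟨hc.1.le.trans hy.1.le, hy.2⟩).1.lt_of_ne' (hne y hy)
  have hσ2 : 0 < σ ^ 2 / 2 := by positivity
  have hu''c : u'' c = 0 := by
    refine IsLocalMin.hasDerivAt_eq_zero ?_ (hu.hasDerivAt_deriv c hc)
    filter_upwards [Icc_mem_nhds hc.1 hc.2] with y hy
    exact hc0 ▸ (hu.deriv_mem_Icc hr.le y hy).1
  have huc : α * u c ≤ h c := by
    have := (min_min_eq_zero_iff.1 (hu.min_eq_zero c hc)).1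
    simp only [diffusionOperator, hc0, hu''c] at this
    linarith
  obtain ⟨δ, hδ, hδr⟩ := Metric.continuousWithinAt_iff.1
    (hu.continuousOn_deriv c (Ioo_subset_Icc_self hc)) r hr
  set K := α / (σ ^ 2 / 2)
  set L := |m| / (σ ^ 2 / 2)
  have hsmall : Tendsto (fun t => (K * t + L) * t) (𝓝 0) (𝓝 0) :=
    (by fun_prop : Continuous fun t => (K * t + L) * t).tendsto' 0 0 (by simp)
  obtain ⟨t, ⟨htX, htδ, htKL⟩, ht⟩ := ((((eventually_lt_nhds (sub_pos.2 hc.2)).and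
    ((eventually_lt_nhds hδ).and (hsmall.eventually (eventually_lt_nhds one_pos))))).filter_mono
      nhdsWithin_le_nhds |>.and self_mem_nhdsWithin).exists (f := 𝓝[>] (0 : ℝ))
  replace ht : 0 < t := ht
  have hode : ∀ x ∈ Ioo c (c + t), u'' x ≤ K * (u x - u c) + L * u' x := by
    intro x hx
    have hxX : x ∈ Ioo 0 X := ⟨hc.1.trans hx.1, by linarith [hx.2]⟩
    have hx' : 0 < u' x := hpos x ⟨hx.1, hxX.2.le⟩
    have hxr : u' x < r := by
      have := hδr (Ioo_subset_Icc_self hxX) (by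
        rw [Real.dist_eq, abs_lt]; constructor <;> linarith [hx.1, hx.2])
      rw [Real.dist_eq, hc0, sub_zero] at this
      exact (le_abs_self _).trans_lt this
    have hΓ := hu.diffusionOperator_eq_zero hxX hx' hxr
    have hhx := hhm (Ioo_subset_Icc_self hc) (Ioo_subset_Icc_self hxX) hx.1.le
    have hm := mul_le_mul_of_nonneg_right (neg_le_abs m) hx'.le
    rw [div_mul_eq_mul_div, div_mul_eq_mul_div, ← add_div, le_div_iff₀' hσ2]
    unfold diffusionOperator at hΓ
    linarith
  have hnonpos := (hu.toIsC2On.mono hc.1.le (by linarith)).deriv_nonpos_of_deriv2_le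
    (by positivity) (by positivity) hc0 (by rwa [add_sub_cancel_left]) hode
  exact (hnonpos (c + t) (right_mem_Icc.2 (by linarith))).not_gt
    (hpos (c + t) ⟨by linarith, by linarith⟩)

theorem deriv_pos (hu : IsBellmanSolution X σ m α r h u u' u'') (hσ : σ ≠ 0) (hα : 0 < α)
    (hr : 0 < r) (hhm : MonotoneOn h (Icc 0 X)) : ∀ x ∈ Ioc 0 X, 0 < u' x := by
  intro x hx
  refine (hu.deriv_mem_Icc hr.le x (Ioc_subset_Icc_self hx)).1.lt_of_ne' fun hx0 => ?_
  have hZ : IsCompact (Icc 0 X ∩ u' ⁻¹' {0}) := isCompact_Icc.of_isClosed_subset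
    (hu.continuousOn_deriv.preimage_isClosed_of_isClosed isClosed_Icc isClosed_singleton)
    inter_subset_left
  obtain ⟨c, ⟨hcI, hc0 : u' c = 0⟩, hlast⟩ :=
    hZ.exists_isGreatest ⟨x, Ioc_subset_Icc_self hx, hx0⟩
  have hcX : c < X := hcI.2.lt_of_ne fun hcX => hr.ne' (hu.deriv_right ▸ hcX ▸ hc0)
  have hc : c ∈ Ioo 0 X := ⟨hx.1.trans_le (hlast ⟨Ioc_subset_Icc_self hx, hx0⟩), hcX⟩
  obtain ⟨y, hy, hy0⟩ := hu.exists_deriv_eq_zero_right hσ hα hr hhm hc hc0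
  exact hy.1.not_ge (hlast ⟨⟨hc.1.le.trans hy.1.le, hy.2⟩, hy0⟩)

theorem exists_Ioo_deriv_eq_of_diffusionOperator_pos (hu : IsBellmanSolution X σ m α r h u u' u'')
    (hX : 0 < X) (hσ : σ ≠ 0) (hα : 0 < α) (hr : 0 < r) (hhc : ContinuousOn h (Icc 0 X))
    (hhm : MonotoneOn h (Icc 0 X)) {x₀ : ℝ} (hx₀ : x₀ ∈ Icc 0 X)
    (hL : 0 < diffusionOperator σ m α h u u' u'' x₀) :
    ∃ p ∈ Ico 0 x₀, ∀ x ∈ Ioo p x₀, u' x = r := by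
  obtain ⟨δ, hδ, hδL⟩ :=
    Metric.continuousWithinAt_iff.1 (hu.continuousOn_diffusionOperator hhc x₀ hx₀) _ hL
  have hr' : ∀ x ∈ Ioo 0 X, |x - x₀| < δ → u' x = r := fun x hx hd => by
    have := hδL (Ioo_subset_Icc_self hx) hd
    rw [Real.dist_eq, abs_sub_lt_iff] at this
    exact hu.deriv_eq_of_diffusionOperator_pos hx (by linarith)
      (hu.deriv_pos hσ hα hr hhm x ⟨hx.1, hx.2.le⟩)
  have hx₀pos : 0 < x₀ := by
    refine hx₀.1.lt_of_ne fun h0 => ?_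
    subst h0
    have hε : 0 < min δ X := lt_min hδ hX
    have : r ≤ u' 0 := ContinuousWithinAt.closure_le (s := Ioo 0 (min δ X))
      (by rw [closure_Ioo hε.ne]; exact left_mem_Icc.2 hε.le) continuousWithinAt_const
      ((hu.continuousOn_deriv 0 hx₀).mono (Ioo_subset_Icc_self.trans
        (Icc_subset_Icc le_rfl (min_le_right _ _))))
      fun y hy => (hr' y ⟨hy.1, hy.2.trans_le (min_le_right _ _)⟩
        (by rw [sub_zero, abs_of_pos hy.1]; exact hy.2.trans_le (min_le_left _ _))).ge
    linarith [hu.deriv_left]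
  refine ⟨max 0 (x₀ - δ), ⟨le_max_left _ _, max_lt hx₀pos (by linarith)⟩, fun x hx => hr' x
    ⟨(le_max_left _ _).trans_lt hx.1, hx.2.trans_le hx₀.2⟩ ?_⟩
  rw [abs_sub_lt_iff]
  constructor <;> linarith [le_max_right 0 (x₀ - δ), hx.1, hx.2]

theorem le_of_isBellmanSolution (hf : IsBellmanSolution X σ m α r h u u' u'') {v v' v'' : ℝ → ℝ}
    (hv : IsBellmanSolution X σ m α r h v v' v'') (hX : 0 < X) (hσ : σ ≠ 0) (hα : 0 < α)
    (hr : 0 < r) (hhc : ContinuousOn h (Icc 0 X)) (hhm : MonotoneOn h (Icc 0 X)) :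
    ∀ x ∈ Icc 0 X, u x ≤ v x := by
  by_contra! ⟨x₁, hx₁, hgt⟩
  have hw : IsC2On (u - v) (u' - v') (u'' - v'') 0 X := hf.sub hv.toIsC2On
  obtain ⟨xm, hxm, hmax⟩ := isCompact_Icc.exists_isMaxOn (nonempty_Icc.2 hX.le) hw.continuousOn
  have hS : IsCompact (Icc 0 X ∩ (u - v) ⁻¹' Ici ((u - v) xm)) := isCompact_Icc.of_isClosed_subset
    (hw.continuousOn.preimage_isClosed_of_isClosed isClosed_Icc isClosed_Ici) inter_subset_left
  obtain ⟨x₀, ⟨hx₀, hx₀max : (u - v) xm ≤ (u - v) x₀⟩, hfirst⟩ :=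
    hS.exists_isLeast ⟨xm, hxm, (le_rfl : (u - v) xm ≤ _)⟩
  have hmax₀ : IsMaxOn (u - v) (Icc 0 X) x₀ := fun y hy => (hmax hy).trans hx₀max
  have hM : 0 < u x₀ - v x₀ := (sub_pos.2 hgt).trans_le (hmax₀ hx₁)
  have hd : u' x₀ = v' x₀ := by
    rcases hx₀.1.eq_or_lt with rfl | h0
    · rw [hf.deriv_left, hv.deriv_left]
    rcases hx₀.2.eq_or_lt with rfl | hX'
    · rw [hf.deriv_right, hv.deriv_right]
    simpa [sub_eq_zero] using
      (hmax₀.isLocalMax (Icc_mem_nhds h0 hX')).hasDerivAt_eq_zero (hw.hasDerivAt x₀ ⟨h0, hX'⟩)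
  have hd2 : u'' x₀ - v'' x₀ ≤ 0 :=
    hw.deriv2_nonpos_of_isMaxOn hX hx₀ hmax₀ (by simp [hd])
  have hL : 0 < diffusionOperator σ m α h v v' v'' x₀ := by
    have := hf.diffusionOperator_nonneg hX hhc x₀ hx₀
    unfold diffusionOperator at this ⊢
    rw [hd] at this
    nlinarith [mul_nonpos_of_nonneg_of_nonpos (by positivity : 0 ≤ σ ^ 2 / 2) hd2, mul_pos hα hM]
  obtain ⟨p, hp, hpr⟩ := hv.exists_Ioo_deriv_eq_of_diffusionOperator_pos hX hσ hα hr hhc hhm hx₀ hL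
  have hanti : AntitoneOn (u - v) (Icc p x₀) := by
    have hI := hw.mono hp.1 hx₀.2
    refine antitoneOn_Icc_of_hasDerivAt_nonpos hI.continuousOn hI.hasDerivAt fun x hx => ?_
    simp only [Pi.sub_apply, hpr x hx, sub_nonpos]
    exact (hf.deriv_mem_Icc hr.le x ⟨hp.1.trans hx.1.le, hx.2.le.trans hx₀.2⟩).2
  exact hp.2.not_ge (hfirst ⟨⟨hp.1, hp.2.le.trans hx₀.2⟩,
    hx₀max.trans (hanti ⟨le_rfl, hp.2.le⟩ ⟨hp.2.le, le_rfl⟩ hp.2.le)⟩)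

end IsBellmanSolution

theorem bellman_C2_uniqueness_general (xmax σbar mbar α rbar : ℝ)
    (hx : 0 < xmax) (hσ : σbar ≠ 0) (hα : 0 < α) (hr : 0 < rbar)
    (hbar : ℝ → ℝ)
    (hbarCont : ContinuousOn hbar (Set.Icc 0 xmax))
    (hbarMono : StrictMonoOn hbar (Set.Icc 0 xmax))
    (f f' f'' : ℝ → ℝ)
    (hfCont : ContinuousOn f (Set.Icc 0 xmax))
    (hf'Cont : ContinuousOn f' (Set.Icc 0 xmax))
    (hf''Cont : ContinuousOn f'' (Set.Icc 0 xmax))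
    (hfDeriv : ∀ x ∈ Set.Ioo 0 xmax, HasDerivAt f (f' x) x)
    (hf'Deriv : ∀ x ∈ Set.Ioo 0 xmax, HasDerivAt f' (f'' x) x)
    (hfEq : ∀ x ∈ Set.Ioo 0 xmax,
      min (min (σbar ^ 2 / 2 * f'' x + mbar * f' x - α * f x + hbar x) (f' x))
        (rbar - f' x) = 0)
    (hf0 : f' 0 = 0) (hfb : f' xmax = rbar)
    (g g' g'' : ℝ → ℝ)
    (hgCont : ContinuousOn g (Set.Icc 0 xmax))
    (hg'Cont : ContinuousOn g' (Set.Icc 0 xmax))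
    (hg''Cont : ContinuousOn g'' (Set.Icc 0 xmax))
    (hgDeriv : ∀ x ∈ Set.Ioo 0 xmax, HasDerivAt g (g' x) x)
    (hg'Deriv : ∀ x ∈ Set.Ioo 0 xmax, HasDerivAt g' (g'' x) x)
    (hgEq : ∀ x ∈ Set.Ioo 0 xmax,
      min (min (σbar ^ 2 / 2 * g'' x + mbar * g' x - α * g x + hbar x) (g' x))
        (rbar - g' x) = 0)
    (hg0 : g' 0 = 0) (hgb : g' xmax = rbar) :
    ∀ x ∈ Set.Icc (0:ℝ) xmax, f x = g x := by
  have hf : IsBellmanSolution xmax σbar mbar α rbar hbar f f' f'' :=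
    ⟨⟨hfCont, hf'Cont, hf''Cont, hfDeriv, hf'Deriv⟩, hfEq, hf0, hfb⟩
  have hg : IsBellmanSolution xmax σbar mbar α rbar hbar g g' g'' :=
    ⟨⟨hgCont, hg'Cont, hg''Cont, hgDeriv, hg'Deriv⟩, hgEq, hg0, hgb⟩
  have hmono := hbarMono.monotoneOn
  exact fun y hy => le_antisymm (hf.le_of_isBellmanSolution hg hx hσ hα hr hbarCont hmono y hy)
    (hg.le_of_isBellmanSolution hf hx hσ hα hr hbarCont hmono y hy)

/-- Uniqueness of `C²[0,𝐱]` solutions of the Harrison–Taksar Bellman equation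
`min{ (1/2)σ̄²u'' + m̄u' − αu + h̄, u', r̄ − u' } = 0` on `(0,𝐱)` with Neumann boundary
conditions `u'(0) = 0`, `u'(𝐱) = r̄`. A `C²[0,𝐱]` function is encoded by `f` together
with functions `f'`, `f''` that are derivatives on `(0,𝐱)` and such that `f`, `f'`, `f''`
are continuous on `[0,𝐱]` (continuous extension of the derivatives to the boundary). -/
theorem bellman_C2_uniqueness (xmax σbar mbar α rbar : ℝ)
    (hx : 0 < xmax) (hσ : σbar ≠ 0) (hα : 0 < α) (hr : 0 < rbar)
    (hbar : ℝ → ℝ)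
    (hbarCont : ContinuousOn hbar (Set.Icc 0 xmax))
    (hbarConv : ConvexOn ℝ (Set.Icc 0 xmax) hbar)
    (hbarMono : StrictMonoOn hbar (Set.Icc 0 xmax))
    (hbar0 : hbar 0 = 0)
    (f f' f'' : ℝ → ℝ)
    (hfCont : ContinuousOn f (Set.Icc 0 xmax))
    (hf'Cont : ContinuousOn f' (Set.Icc 0 xmax))
    (hf''Cont : ContinuousOn f'' (Set.Icc 0 xmax))
    (hfDeriv : ∀ x ∈ Set.Ioo 0 xmax, HasDerivAt f (f' x) x)
    (hf'Deriv : ∀ x ∈ Set.Ioo 0 xmax, HasDerivAt f' (f'' x) x)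
    (hfEq : ∀ x ∈ Set.Ioo 0 xmax,
      min (min (σbar ^ 2 / 2 * f'' x + mbar * f' x - α * f x + hbar x) (f' x))
        (rbar - f' x) = 0)
    (hf0 : f' 0 = 0) (hfb : f' xmax = rbar)
    (g g' g'' : ℝ → ℝ)
    (hgCont : ContinuousOn g (Set.Icc 0 xmax))
    (hg'Cont : ContinuousOn g' (Set.Icc 0 xmax))
    (hg''Cont : ContinuousOn g'' (Set.Icc 0 xmax))
    (hgDeriv : ∀ x ∈ Set.Ioo 0 xmax, HasDerivAt g (g' x) x)
    (hg'Deriv : ∀ x ∈ Set.Ioo 0 xmax, HasDerivAt g' (g'' x) x)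
    (hgEq : ∀ x ∈ Set.Ioo 0 xmax,
      min (min (σbar ^ 2 / 2 * g'' x + mbar * g' x - α * g x + hbar x) (g' x))
        (rbar - g' x) = 0)
    (hg0 : g' 0 = 0) (hgb : g' xmax = rbar) :
    ∀ x ∈ Set.Icc (0:ℝ) xmax, f x = g x :=
  bellman_C2_uniqueness_general xmax σbar mbar α rbar hx hσ hα hr hbar hbarCont hbarMono f f' f''
    hfCont hf'Cont hf''Cont hfDeriv hf'Deriv hfEq hf0 hfb g g' g'' hgCont hg'Cont hg''Cont hgDeriv
    hg'Deriv hgEq hg0 hgb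
end
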